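/- arXiv:math/0212307 — 2 statements merged into one kernel-verified Lean document; each statement's English description precedes it below -/
import Mathlib

section
/- Let D ⊂ ℝⁿ be nonempty compact, φ : D → [0,∞) continuous not identically zero, and f : [0,∞) → [0,∞) continuous, non-decreasing and unbounded. Let H₁(q) := sup_{x ∈ D} φ(x) f(|x − q|). Then for every q* ∈ ℝⁿ there exists p* ∈ co(D) (the convex hull of D) with H₁(p*) ≤ H₁(q*); in particular H₁ attains a global minimum at some point of co(D). -/
/-!
Projecting `q` onto the compact convex set `co(D)` moves it closer to every point of `D`
(the projection `p` satisfies `⟪q - p, x - p⟫ ≤ 0` on `co(D)`), and `H₁` is monotone in the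
distances `‖x - q‖` because `φ ≥ 0` and `f` is monotone. As a supremum over a compact set of a
jointly continuous function, `H₁` is continuous, so it attains its minimum on the compact set
`co(D)`, and by the first part that minimum is global.
-/

open Set

section Caratheodory

variable {E : Type*} [NormedAddCommGroup E] [NormedSpace ℝ E] [FiniteDimensional ℝ E]

theorem convexHull_eq_biUnion_image_stdSimplex (s : Set E) :
    convexHull ℝ s = ⋃ k ∈ Finset.range (Module.finrank ℝ E + 2),
      (fun p : (Fin k → ℝ) × (Fin k → E) => ∑ i, p.1 i • p.2 i) ''
        (stdSimplex ℝ (Fin k) ×ˢ univ.pi fun _ => s) := by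
  apply Subset.antisymm
  · intro x hx
    obtain ⟨ι, _, z, w, hzs, hz, hw0, hw1, rfl⟩ := eq_pos_convex_span_of_mem_convexHull hx
    have hcard : Fintype.card ι < Module.finrank ℝ E + 2 := Nat.lt_succ_of_le
      (hz.card_le_finrank_succ.trans (Nat.succ_le_succ (Submodule.finrank_le _)))
    let e := Fintype.equivFin ι
    refine mem_biUnion (Finset.mem_range.2 hcard) ⟨(w ∘ e.symm, z ∘ e.symm),
      ⟨⟨fun i => (hw0 _).le, ?_⟩, fun i _ => hzs (mem_range_self _)⟩, ?_⟩
    · simpa only [Function.comp_apply] using (e.symm.sum_comp w).trans hw1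
    · exact e.symm.sum_comp fun i => w i • z i
  · simp only [iUnion_subset_iff]
    rintro k - _ ⟨⟨w, z⟩, ⟨hw, hz⟩, rfl⟩
    exact (convex_convexHull ℝ s).sum_mem (fun i _ => hw.1 i) hw.2
      fun i _ => subset_convexHull ℝ s (hz i (mem_univ i))

theorem IsCompact.convexHull {s : Set E} (hs : IsCompact s) : IsCompact (convexHull ℝ s) := by
  rw [convexHull_eq_biUnion_image_stdSimplex]
  exact Finset.isCompact_biUnion _ fun k _ =>
    ((isCompact_stdSimplex ℝ _).prod (isCompact_univ_pi fun _ => hs)).image (by fun_prop)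

end Caratheodory

theorem exists_forall_norm_sub_le_norm_sub {F : Type*} [NormedAddCommGroup F]
    [InnerProductSpace ℝ F] {K : Set F} (hne : K.Nonempty) (hc : IsComplete K)
    (hK : Convex ℝ K) (q : F) :
    ∃ p ∈ K, ∀ x ∈ K, ‖x - p‖ ≤ ‖x - q‖ := by
  obtain ⟨p, hpK, hp⟩ := exists_norm_eq_iInf_of_complete_convex hne hc hK q
  rw [norm_eq_iInf_iff_real_inner_le_zero hK hpK] at hp
  refine ⟨p, hpK, fun x hx => ?_⟩
  have hsq : ‖x - q‖ ^ 2 = ‖x - p‖ ^ 2 - 2 * inner ℝ (q - p) (x - p) + ‖q - p‖ ^ 2 := by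
    rw [real_inner_comm, ← norm_sub_sq_real, sub_sub_sub_cancel_right]
  nlinarith [hp x hx, norm_nonneg (x - p), norm_nonneg (x - q), sq_nonneg ‖q - p‖]

section WeightedSupCost

variable {E : Type*} [NormedAddCommGroup E] {D : Set E} {φ : E → ℝ} {f : ℝ → ℝ}

/-- The function `H₁` of the statement. -/
noncomputable def weightedSupCost (D : Set E) (φ : E → ℝ) (f : ℝ → ℝ) (q : E) : ℝ :=
  sSup ((fun x => φ x * f ‖x - q‖) '' D)

theorem continuous_weightedSupCost (hD : IsCompact D) (hφ : ContinuousOn φ D)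
    (hf : ContinuousOn f (Ici 0)) : Continuous (weightedSupCost D φ f) := by
  have : CompactSpace D := isCompact_iff_compactSpace.mp hD
  have hcost : Continuous fun p : E × D => φ p.2 * f ‖(p.2 : E) - p.1‖ :=
    (hφ.comp_continuous (by fun_prop) fun p => p.2.2).mul
      (hf.comp_continuous (by fun_prop) fun _ => norm_nonneg _)
  convert isCompact_univ.continuous_sSup
    (f := fun (q : E) (x : D) => φ x * f ‖(x : E) - q‖) hcost using 2 with q
  rw [weightedSupCost, image_univ, image_eq_range]

theorem weightedSupCost_mono (hD : IsCompact D) (hDne : D.Nonempty) (hφ : ContinuousOn φ D)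
    (hf : ContinuousOn f (Ici 0)) (hφ0 : ∀ x ∈ D, 0 ≤ φ x) (hfm : MonotoneOn f (Ici 0))
    {p q : E} (hpq : ∀ x ∈ D, ‖x - p‖ ≤ ‖x - q‖) :
    weightedSupCost D φ f p ≤ weightedSupCost D φ f q := by
  have hbdd : BddAbove ((fun x => φ x * f ‖x - q‖) '' D) :=
    (hD.image_of_continuousOn (hφ.mul (hf.comp_continuous (by fun_prop)
      fun _ => norm_nonneg _).continuousOn)).bddAbove
  refine csSup_le (hDne.image _) (forall_mem_image.2 fun x hx => ?_)
  calc φ x * f ‖x - p‖ ≤ φ x * f ‖x - q‖ :=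
        mul_le_mul_of_nonneg_left (hfm (norm_nonneg _) (norm_nonneg _) (hpq x hx)) (hφ0 x hx)
    _ ≤ weightedSupCost D φ f q := le_csSup hbdd (mem_image_of_mem _ hx)

end WeightedSupCost

theorem stmt_4_general {n : ℕ} (D : Set (EuclideanSpace ℝ (Fin n)))
    (hD : IsCompact D) (hDne : D.Nonempty)
    (φ : EuclideanSpace ℝ (Fin n) → ℝ) (f : ℝ → ℝ)
    (hφc : ContinuousOn φ D) (hφ0 : ∀ x ∈ D, 0 ≤ φ x)
    (hfc : ContinuousOn f (Ici 0)) (hfm : MonotoneOn f (Ici 0)) :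
    (∀ q : EuclideanSpace ℝ (Fin n), ∃ p ∈ convexHull ℝ D,
      sSup ((fun x => φ x * f ‖x - p‖) '' D) ≤ sSup ((fun x => φ x * f ‖x - q‖) '' D)) ∧
    (∃ p ∈ convexHull ℝ D, ∀ q : EuclideanSpace ℝ (Fin n),
      sSup ((fun x => φ x * f ‖x - p‖) '' D) ≤ sSup ((fun x => φ x * f ‖x - q‖) '' D)) := by
  have hK : IsCompact (convexHull ℝ D) := hD.convexHull
  have hKne : (convexHull ℝ D).Nonempty := hDne.convexHull
  have descent : ∀ q, ∃ p ∈ convexHull ℝ D,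
      weightedSupCost D φ f p ≤ weightedSupCost D φ f q := by
    intro q
    obtain ⟨p, hpK, hp⟩ :=
      exists_forall_norm_sub_le_norm_sub hKne hK.isComplete (convex_convexHull ℝ D) q
    exact ⟨p, hpK, weightedSupCost_mono hD hDne hφc hfc hφ0 hfm
      fun x hx => hp x (subset_convexHull ℝ D hx)⟩
  obtain ⟨p, hpK, hmin⟩ :=
    hK.exists_isMinOn hKne (continuous_weightedSupCost hD hφc hfc).continuousOn
  refine ⟨descent, p, hpK, fun q => ?_⟩
  obtain ⟨p', hp'K, hp'⟩ := descent q
  exact (hmin hp'K).trans hp'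

/-- `H₁` does not increase under projection into `co(D)`, and it attains
a global minimum at some point of `co(D)`. -/
theorem stmt_4 {n : ℕ} (D : Set (EuclideanSpace ℝ (Fin n)))
    (hD : IsCompact D) (hDne : D.Nonempty)
    (φ : EuclideanSpace ℝ (Fin n) → ℝ) (f : ℝ → ℝ)
    (hφc : ContinuousOn φ D) (hφ0 : ∀ x ∈ D, 0 ≤ φ x)
    (hφne : ∃ x ∈ D, φ x ≠ 0)
    (hfc : ContinuousOn f (Ici 0)) (hfm : MonotoneOn f (Ici 0))
    (hf0 : ∀ s : ℝ, 0 ≤ s → 0 ≤ f s)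
    (hfu : ∀ M : ℝ, ∃ s : ℝ, 0 ≤ s ∧ M ≤ f s) :
    (∀ q : EuclideanSpace ℝ (Fin n), ∃ p ∈ convexHull ℝ D,
      sSup ((fun x => φ x * f ‖x - p‖) '' D) ≤ sSup ((fun x => φ x * f ‖x - q‖) '' D)) ∧
    (∃ p ∈ convexHull ℝ D, ∀ q : EuclideanSpace ℝ (Fin n),
      sSup ((fun x => φ x * f ‖x - p‖) '' D) ≤ sSup ((fun x => φ x * f ‖x - q‖) '' D)) :=
  stmt_4_general D hD hDne φ f hφc hφ0 hfc hfm
end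

section
/- Let A, B, K be real matrices with A of size n×n, B of size n×m, K of size m×n, such that A + BK is Hurwitz (all eigenvalues have negative real part), and let P be the unique positive definite symmetric matrix satisfying (A+BK)ᵀP + P(A+BK) = −I. If A is not Hurwitz-stable (i.e., AᵀP + PA has a nonnegative eigenvalue, equivalently some eigenvalue of A has nonnegative real part), then the operator norm of PBK satisfies ‖PBK‖ ≥ 1/2. -/
open Matrix

/-!
Writing `M = PBK`, the Lyapunov equation says `AᵀP + PA = -I - (Mᵀ + M)`. For an eigenvector `v`
of `AᵀP + PA` with eigenvalue `μ ≥ 0` this gives `2 vᵀMv = -(1 + μ) ‖v‖² ≤ -‖v‖²`, while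
`|vᵀMv| ≤ ‖M‖ ‖v‖²`.
-/

namespace Matrix

variable {ι : Type*} [Fintype ι]

theorem exists_mulVec_eq_smul_of_mem_spectrum {K : Type*} [Field K] [DecidableEq ι]
    {Q : Matrix ι ι K} {μ : K} (hμ : μ ∈ spectrum K Q) : ∃ v ≠ 0, Q *ᵥ v = μ • v := by
  rw [← spectrum_toLin', ← Module.End.hasEigenvalue_iff_mem_spectrum] at hμ
  obtain ⟨v, hv⟩ := hμ.exists_hasEigenvector
  exact ⟨v, hv.2, by simpa using hv.apply_eq_smul⟩

theorem abs_dotProduct_mulVec_self_le [DecidableEq ι] (M : Matrix ι ι ℝ) (v : ι → ℝ) :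
    |v ⬝ᵥ M *ᵥ v| ≤ ‖toEuclideanCLM (𝕜 := ℝ) M‖ * (v ⬝ᵥ v) := by
  set w : EuclideanSpace ℝ ι := WithLp.toLp 2 v
  have hinner : inner ℝ w (toEuclideanCLM (𝕜 := ℝ) M w) = v ⬝ᵥ M *ᵥ v := by
    rw [toEuclideanCLM_toLp, EuclideanSpace.inner_toLp_toLp, dotProduct_comm]
    rfl
  have hnorm : ‖w‖ ^ 2 = v ⬝ᵥ v := by
    rw [← real_inner_self_eq_norm_sq, EuclideanSpace.inner_toLp_toLp]
    rfl
  calc |v ⬝ᵥ M *ᵥ v| ≤ ‖w‖ * ‖toEuclideanCLM (𝕜 := ℝ) M w‖ :=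
        hinner ▸ abs_real_inner_le_norm _ _
    _ ≤ ‖w‖ * (‖toEuclideanCLM (𝕜 := ℝ) M‖ * ‖w‖) := by
        gcongr
        exact ContinuousLinearMap.le_opNorm _ _
    _ = ‖toEuclideanCLM (𝕜 := ℝ) M‖ * (v ⬝ᵥ v) := by rw [← hnorm]; ring

theorem transpose_mul_add_mul_eq_of_lyapunov {R : Type*} [CommRing R] {A F P C : Matrix ι ι R}
    (hP : P.IsSymm) (h : (A + F)ᵀ * P + P * (A + F) = C) :
    Aᵀ * P + P * A = C - ((P * F)ᵀ + P * F) := by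
  rw [eq_sub_iff_add_eq, ← h, transpose_mul, hP.eq]
  simp only [transpose_add, add_mul, mul_add]
  abel

theorem one_half_le_norm_toEuclideanCLM_of_nonneg_eigenvalue [DecidableEq ι] {M Q : Matrix ι ι ℝ}
    (hQ : Q = -1 - (Mᵀ + M)) {μ : ℝ} (hμ : μ ∈ spectrum ℝ Q) (hμ0 : 0 ≤ μ) :
    1 / 2 ≤ ‖toEuclideanCLM (𝕜 := ℝ) M‖ := by
  obtain ⟨v, hv0, hv⟩ := exists_mulVec_eq_smul_of_mem_spectrum hμ
  have hvv : 0 < v ⬝ᵥ v := by simpa using dotProduct_star_self_pos_iff.2 hv0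
  have hquad : μ * (v ⬝ᵥ v) = -(v ⬝ᵥ v) - 2 * (v ⬝ᵥ M *ᵥ v) := by
    calc μ * (v ⬝ᵥ v) = v ⬝ᵥ Q *ᵥ v := by rw [hv, dotProduct_smul, smul_eq_mul]
      _ = -(v ⬝ᵥ v) - 2 * (v ⬝ᵥ M *ᵥ v) := by
        rw [hQ]
        simp only [sub_mulVec, add_mulVec, neg_mulVec, one_mulVec, dotProduct_sub,
          dotProduct_add, dotProduct_neg, dotProduct_transpose_mulVec]
        ring
  have hform : 1 / 2 * (v ⬝ᵥ v) ≤ |v ⬝ᵥ M *ᵥ v| := le_abs.2 (Or.inr (by nlinarith))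
  exact le_of_mul_le_mul_right (hform.trans (abs_dotProduct_mulVec_self_le M v)) hvv

end Matrix

theorem stmt_13_general {n m : ℕ} (A : Matrix (Fin n) (Fin n) ℝ)
    (B : Matrix (Fin n) (Fin m) ℝ) (K : Matrix (Fin m) (Fin n) ℝ)
    (P : Matrix (Fin n) (Fin n) ℝ) (hPsymm : P.IsSymm)
    (hLyap : (A + B * K)ᵀ * P + P * (A + B * K) = -1)
    (hA : ∃ μ ∈ spectrum ℝ (Aᵀ * P + P * A), 0 ≤ μ) :
    (1 : ℝ) / 2 ≤ ‖Matrix.toEuclideanCLM (𝕜 := ℝ) (P * B * K)‖ := by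
  obtain ⟨μ, hμ, hμ0⟩ := hA
  rw [Matrix.mul_assoc]
  exact one_half_le_norm_toEuclideanCLM_of_nonneg_eigenvalue
    (transpose_mul_add_mul_eq_of_lyapunov hPsymm hLyap) hμ hμ0

/-- if `A + BK` is Hurwitz, `P` solves the Lyapunov equation
`(A+BK)ᵀP + P(A+BK) = -I`, and `A` is not Hurwitz-stable (i.e. `AᵀP + PA` has a
nonnegative eigenvalue), then the Euclidean operator norm of `PBK` is at least `1/2`. -/
theorem stmt_13 {n m : ℕ} (A : Matrix (Fin n) (Fin n) ℝ)
    (B : Matrix (Fin n) (Fin m) ℝ) (K : Matrix (Fin m) (Fin n) ℝ)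
    (hHurwitz : ∀ μ ∈ spectrum ℂ ((A + B * K).map (Complex.ofReal)), μ.re < 0)
    (P : Matrix (Fin n) (Fin n) ℝ) (hPpos : P.PosDef) (hPsymm : P.IsSymm)
    (hLyap : (A + B * K)ᵀ * P + P * (A + B * K) = -1)
    (hA : ∃ μ ∈ spectrum ℝ (Aᵀ * P + P * A), 0 ≤ μ) :
    (1 : ℝ) / 2 ≤ ‖Matrix.toEuclideanCLM (𝕜 := ℝ) (P * B * K)‖ :=
  stmt_13_general A B K P hPsymm hLyap hA
end
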